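/- Suppose σ_1 > p − 1, σ_2 > q − 1 and (τ, s) ∈ K. Then there exist constants ξ_1, ξ_2 > 0 and ξ_3, ξ_4 ≥ 0 — one may take ξ_2 = (2 − τ − s − (1−s)²/(1+τ))β, ξ_3 = ((1−s)²/(1+τ))β and ξ_4 = (1−τ)/(1+τ) — such that the sequences {w^k} and {w̃^k} generated by GS-ADMM satisfy, for every k ≥ 1: ‖w^k − w̃^k‖_G² ≥ ξ_1(Σ_{i=1}^p‖A_i(x_i^k − x_i^{k+1})‖² + Σ_{j=1}^q‖B_j(y_j^k − y_j^{k+1})‖²) + ξ_2‖Ax^{k+1} + By^{k+1} − c‖² + ξ_3(‖Ax^{k+1} + By^{k+1} − c‖² − ‖Ax^k + By^k − c‖²) + ξ_4(‖y^{k+1} − y^k‖_{H_y}² − ‖y^k − y^{k−1}‖_{H_y}²). -/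

import Mathlib

/-!
The `x`-part of `‖w^k - w̃^k‖_G²` is bounded below by Cauchy–Schwarz,
`‖Σ_i A_i u_i‖² ≤ p Σ_i ‖A_i u_i‖²`, and likewise the `H_y`-part. For the cross term, add the
first-order optimality conditions of the `j`-th `y`-subproblem at iterations `k - 1` and `k`
(monotonicity of `∂g_j`) and eliminate `λ^{k-1/2}, λ^k, λ^{k+1/2}` through the multiplier
updates; summed over `j` this bounds `(1 + τ)β⟨B(y^k - y^{k+1}), Ax^{k+1} + By^k - c⟩` from
below. Inserted into the `G`-form, what is left over is
`β/(1+τ) ‖(1-τ)B(y^k - y^{k+1}) + (1-s)(Ax^k + By^k - c)‖² ≥ 0`, and `τ ≤ 1` is what keeps the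
signs right.
-/

open scoped RealInnerProductSpace
open Matrix Filter

/-- Multiplication of a matrix with a vector, viewed as a map between Euclidean spaces. -/
noncomputable def mv {n m : ℕ} (M : Matrix (Fin n) (Fin m) ℝ)
    (v : EuclideanSpace ℝ (Fin m)) : EuclideanSpace ℝ (Fin n) :=
  WithLp.toLp 2 (M.mulVec v)

/-- `sA A x = Σ_i A_i x_i`. -/
noncomputable def sA {p n : ℕ} {m : Fin p → ℕ}
    (A : ∀ i, Matrix (Fin n) (Fin (m i)) ℝ)
    (x : ∀ i, EuclideanSpace ℝ (Fin (m i))) : EuclideanSpace ℝ (Fin n) :=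
  ∑ i, mv (A i) (x i)

/-- The augmented Lagrangian
`L_β(x,y,λ) = Σ_i f_i(x_i) + Σ_j g_j(y_j) − ⟨λ, Ax + By − c⟩ + (β/2)‖Ax + By − c‖²`. -/
noncomputable def Lag {p q n : ℕ} {m : Fin p → ℕ} {d : Fin q → ℕ}
    (A : ∀ i, Matrix (Fin n) (Fin (m i)) ℝ)
    (B : ∀ j, Matrix (Fin n) (Fin (d j)) ℝ)
    (c : EuclideanSpace ℝ (Fin n))
    (f : ∀ i, EuclideanSpace ℝ (Fin (m i)) → ℝ)
    (g : ∀ j, EuclideanSpace ℝ (Fin (d j)) → ℝ)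
    (β : ℝ)
    (x : ∀ i, EuclideanSpace ℝ (Fin (m i)))
    (y : ∀ j, EuclideanSpace ℝ (Fin (d j)))
    (lam : EuclideanSpace ℝ (Fin n)) : ℝ :=
  (∑ i, f i (x i)) + (∑ j, g j (y j)) - ⟪lam, sA A x + sA B y - c⟫
    + β / 2 * ‖sA A x + sA B y - c‖ ^ 2

/-- The `H`-quadratic form `‖(x,y,λ)‖_H²`. -/
noncomputable def Hform {p q n : ℕ} {m : Fin p → ℕ} {d : Fin q → ℕ}
    (A : ∀ i, Matrix (Fin n) (Fin (m i)) ℝ)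
    (B : ∀ j, Matrix (Fin n) (Fin (d j)) ℝ)
    (β σ1 σ2 τ s : ℝ)
    (x : ∀ i, EuclideanSpace ℝ (Fin (m i)))
    (y : ∀ j, EuclideanSpace ℝ (Fin (d j)))
    (lam : EuclideanSpace ℝ (Fin n)) : ℝ :=
  β * ((σ1 + 1) * (∑ i, ‖mv (A i) (x i)‖ ^ 2) - ‖sA A x‖ ^ 2)
    + (σ2 + 1) * β * (∑ j, ‖mv (B j) (y j)‖ ^ 2)
    - τ * s / (τ + s) * β * ‖sA B y‖ ^ 2
    - 2 * τ / (τ + s) * ⟪sA B y, lam⟫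
    + 1 / (β * (τ + s)) * ‖lam‖ ^ 2

/-- The `G`-quadratic form `‖(x,y,λ)‖_G²`. -/
noncomputable def Gform {p q n : ℕ} {m : Fin p → ℕ} {d : Fin q → ℕ}
    (A : ∀ i, Matrix (Fin n) (Fin (m i)) ℝ)
    (B : ∀ j, Matrix (Fin n) (Fin (d j)) ℝ)
    (β σ1 σ2 τ s : ℝ)
    (x : ∀ i, EuclideanSpace ℝ (Fin (m i)))
    (y : ∀ j, EuclideanSpace ℝ (Fin (d j)))
    (lam : EuclideanSpace ℝ (Fin n)) : ℝ :=
  β * ((σ1 + 1) * (∑ i, ‖mv (A i) (x i)‖ ^ 2) - ‖sA A x‖ ^ 2)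
    + (σ2 + 1) * β * (∑ j, ‖mv (B j) (y j)‖ ^ 2)
    - s * β * ‖sA B y‖ ^ 2
    + 2 * (s - 1) * ⟪sA B y, lam⟫
    + (2 - τ - s) / β * ‖lam‖ ^ 2

/-- The `H_y`-quadratic form `‖y‖_{H_y}² = β[(σ₂+1)Σ_j‖B_j y_j‖² − ‖By‖²]`. -/
noncomputable def Hyform {q n : ℕ} {d : Fin q → ℕ}
    (B : ∀ j, Matrix (Fin n) (Fin (d j)) ℝ)
    (β σ2 : ℝ)
    (y : ∀ j, EuclideanSpace ℝ (Fin (d j))) : ℝ :=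
  β * ((σ2 + 1) * (∑ j, ‖mv (B j) (y j)‖ ^ 2) - ‖sA B y‖ ^ 2)

section InnerProductSpace

variable {ι F : Type*} [Fintype ι] [NormedAddCommGroup F]

lemma norm_sum_sq_le_card_mul_sum_norm_sq (v : ι → F) :
    ‖∑ j, v j‖ ^ 2 ≤ Fintype.card ι * ∑ j, ‖v j‖ ^ 2 :=
  calc ‖∑ j, v j‖ ^ 2 ≤ (∑ j, ‖v j‖) ^ 2 := by gcongr; exact norm_sum_le _ _
    _ ≤ _ := sq_sum_le_card_mul_sum_sq

def blockForm (σ : ℝ) (v : ι → F) : ℝ :=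
  (σ + 1) * ∑ j, ‖v j‖ ^ 2 - ‖∑ j, v j‖ ^ 2

lemma mul_sum_norm_sq_le_blockForm {μ σ : ℝ} (hμ : μ ≤ σ + 1 - Fintype.card ι) (v : ι → F) :
    μ * ∑ j, ‖v j‖ ^ 2 ≤ blockForm σ v := by
  have hCS := norm_sum_sq_le_card_mul_sum_norm_sq v
  have hμ' := mul_le_mul_of_nonneg_right hμ
    (Finset.sum_nonneg fun j (_ : j ∈ Finset.univ) => sq_nonneg ‖v j‖)
  rw [blockForm]
  linarith

lemma blockForm_nonneg {σ : ℝ} (hσ : (Fintype.card ι : ℝ) ≤ σ + 1) (v : ι → F) :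
    0 ≤ blockForm σ v := by
  simpa using mul_sum_norm_sq_le_blockForm (μ := 0) (by linarith) v

lemma blockForm_neg (σ : ℝ) (v : ι → F) : blockForm σ (-v) = blockForm σ v := by
  simp [blockForm]

variable [InnerProductSpace ℝ F]

lemma two_mul_inner_sub_blockForm (σ : ℝ) (a b : ι → F) :
    2 * (⟪∑ j, a j, ∑ j, b j⟫ - (σ + 1) * ∑ j, ⟪a j, a j + b j⟫)
      = blockForm σ b - blockForm σ a - blockForm σ (a + b) - 2 * ‖∑ j, a j‖ ^ 2 := by
  have hj : ∀ j, 2 * ⟪a j, a j + b j⟫ = ‖a j‖ ^ 2 - ‖b j‖ ^ 2 + ‖a j + b j‖ ^ 2 := fun j => by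
    rw [inner_add_right, real_inner_self_eq_norm_sq, norm_add_sq_real]; ring
  have hsum : 2 * ∑ j, ⟪a j, a j + b j⟫
      = ∑ j, ‖a j‖ ^ 2 - ∑ j, ‖b j‖ ^ 2 + ∑ j, ‖a j + b j‖ ^ 2 := by
    rw [Finset.mul_sum, Finset.sum_congr rfl fun j _ => hj j, Finset.sum_add_distrib,
      Finset.sum_sub_distrib]
  have hab : ∑ j, (a + b) j = ∑ j, a j + ∑ j, b j := Finset.sum_add_distrib
  simp only [blockForm, Pi.add_apply] at hab ⊢
  rw [hab, norm_add_sq_real]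
  linear_combination (-(σ + 1)) * hsum

lemma le_inner_sum_of_forall_inner_nonneg {σ β : ℝ} (hσ : (Fintype.card ι : ℝ) ≤ σ + 1)
    (hβ : 0 ≤ β) (a b : ι → F) (w : F)
    (h : ∀ j, 0 ≤ ⟪a j, w + β • ∑ l, b l - ((σ + 1) * β) • (a j + b j)⟫) :
    β * (blockForm σ a - blockForm σ b) / 2 + β * ‖∑ j, a j‖ ^ 2 ≤ ⟪∑ j, a j, w⟫ := by
  have hsum : 0 ≤ ⟪∑ j, a j, w⟫ + β * (⟪∑ j, a j, ∑ j, b j⟫ - (σ + 1) * ∑ j, ⟪a j, a j + b j⟫) := by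
    have := Finset.sum_nonneg fun j (_ : j ∈ Finset.univ) => h j
    simp only [inner_sub_right, inner_add_right, real_inner_smul_right, Finset.sum_sub_distrib,
      Finset.sum_add_distrib, ← Finset.mul_sum, ← sum_inner] at this ⊢
    linear_combination this
  have hid := two_mul_inner_sub_blockForm σ a b
  have hab := mul_nonneg hβ (blockForm_nonneg hσ (a + b))
  nlinarith

lemma le_mul_two_inner_sub_norm_sq_of_le_inner (a e r : F) {β τ s Ha Hb : ℝ} (hβ : 0 ≤ β)
    (hτ : 0 < 1 + τ) (hτ1 : τ ≤ 1)
    (hkey : β * (Ha - Hb) / 2 + β * ‖a‖ ^ 2 ≤ ⟪a, ((s - 1) * β) • r + ((1 + τ) * β) • e⟫) :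
    (1 - τ) / (1 + τ) * (β * Ha - β * Hb) - (1 - s) ^ 2 / (1 + τ) * β * ‖r‖ ^ 2
      ≤ (1 - τ) * β * (2 * ⟪a, e⟫ - ‖a‖ ^ 2) := by
  have hsq : 0 ≤ β * ‖(1 - τ) • a + (1 - s) • r‖ ^ 2 := by positivity
  rw [norm_add_sq_real, norm_smul, norm_smul, real_inner_smul_left, real_inner_smul_right,
    Real.norm_eq_abs, Real.norm_eq_abs, mul_pow, mul_pow, sq_abs, sq_abs] at hsq
  rw [inner_add_right, real_inner_smul_right, real_inner_smul_right] at hkey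
  have hmul : (1 - τ) * (β * Ha - β * Hb) - (1 - s) ^ 2 * β * ‖r‖ ^ 2
      ≤ (1 + τ) * ((1 - τ) * β * (2 * ⟪a, e⟫ - ‖a‖ ^ 2)) := by
    linear_combination 2 * (1 - τ) * hkey + hsq
  calc _ = ((1 - τ) * (β * Ha - β * Hb) - (1 - s) ^ 2 * β * ‖r‖ ^ 2) / (1 + τ) := by ring
    _ ≤ _ := by rwa [div_le_iff₀' hτ]

end InnerProductSpace

lemma nonneg_of_forall_nonneg_add_mul {X K : ℝ} (h : ∀ θ : ℝ, 0 < θ → θ ≤ 1 → 0 ≤ X + θ * K) :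
    0 ≤ X := by
  have hcont : Continuous fun θ : ℝ => X + θ * K := by fun_prop
  have hlim : Tendsto (fun θ : ℝ => X + θ * K) (nhdsWithin 0 (Set.Ioi 0)) (nhds X) :=
    (hcont.tendsto' 0 X (by simp)).mono_left nhdsWithin_le_nhds
  refine ge_of_tendsto hlim ?_
  filter_upwards [Ioo_mem_nhdsGT (zero_lt_one' ℝ)] with θ hθ using h θ hθ.1 hθ.2.le

section VariationalInequality

variable {E F : Type*} [AddCommGroup E] [Module ℝ E] [NormedAddCommGroup F] [InnerProductSpace ℝ F]

lemma ConvexOn.inner_nonneg_of_isMinOn {Y : Set E} {g : E → ℝ} (hg : ConvexOn ℝ Y g)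
    (T : E →ₗ[ℝ] F) (ν : F) (c : ℝ) {u : E}
    (hmin : IsMinOn (fun z => g z + ⟪ν, T z⟫ + c / 2 * ‖T z‖ ^ 2) Y u) (hu : u ∈ Y)
    {z : E} (hz : z ∈ Y) :
    0 ≤ g z - g u + ⟪T z - T u, ν + c • T u⟫ := by
  set D := T z - T u
  refine nonneg_of_forall_nonneg_add_mul (K := c / 2 * ‖D‖ ^ 2) fun θ hθ hθ1 => ?_
  have hmem : (1 - θ) • u + θ • z ∈ Y := hg.1 hu hz (by linarith) hθ.le (by ring)
  have hconv : g ((1 - θ) • u + θ • z) ≤ (1 - θ) * g u + θ * g z :=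
    hg.2 hu hz (by linarith) hθ.le (by ring)
  have hT : T ((1 - θ) • u + θ • z) = T u + θ • D := by
    simp only [map_add, map_smul, D]; module
  have hopt := isMinOn_iff.1 hmin _ hmem
  simp only [hT, inner_add_right, real_inner_smul_right, norm_add_sq_real, norm_smul,
    Real.norm_eq_abs, mul_pow, sq_abs] at hopt
  rw [inner_add_right, real_inner_smul_right, real_inner_comm ν D, real_inner_comm (T u) D]
  refine nonneg_of_mul_nonneg_right ?_ hθ
  linear_combination hopt + hconv

end VariationalInequality

lemma Finset.sum_update_apply {ι M : Type*} {α : ι → Type*} [Fintype ι] [DecidableEq ι]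
    [AddCommGroup M] (φ : ∀ i, α i → M) (y : ∀ i, α i) (j : ι) (z : α j) :
    ∑ l, φ l (Function.update y j z l) = ∑ l, φ l (y l) + (φ j z - φ j (y j)) := by
  rw [Fintype.sum_congr _ _ fun l => Function.apply_update φ y j z l,
    Finset.sum_update_of_mem (Finset.mem_univ j), Finset.sdiff_singleton_eq_erase,
    Finset.sum_erase_eq_sub (Finset.mem_univ j)]
  abel

section GSADMM

variable {p q n : ℕ} {m : Fin p → ℕ} {d : Fin q → ℕ}
  (A : ∀ i, Matrix (Fin n) (Fin (m i)) ℝ) (B : ∀ j, Matrix (Fin n) (Fin (d j)) ℝ)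

lemma mv_eq_toLpLin {k : ℕ} (M : Matrix (Fin n) (Fin k) ℝ) (v : EuclideanSpace ℝ (Fin k)) :
    mv M v = Matrix.toLpLin 2 2 M v := rfl

lemma mv_sub {k : ℕ} (M : Matrix (Fin n) (Fin k) ℝ) (u v : EuclideanSpace ℝ (Fin k)) :
    mv M (u - v) = mv M u - mv M v := by
  simp only [mv_eq_toLpLin, map_sub]

lemma sA_sub (x x' : ∀ i, EuclideanSpace ℝ (Fin (m i))) :
    sA A (fun i => x i - x' i) = sA A x - sA A x' := by
  simp only [sA, mv_sub, Finset.sum_sub_distrib]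

lemma Hyform_eq (β σ : ℝ) (y : ∀ j, EuclideanSpace ℝ (Fin (d j))) :
    Hyform B β σ y = β * blockForm σ fun j => mv (B j) (y j) := rfl

lemma Hyform_sub_comm (β σ : ℝ) (u v : ∀ j, EuclideanSpace ℝ (Fin (d j))) :
    Hyform B β σ (fun j => u j - v j) = Hyform B β σ (fun j => v j - u j) := by
  rw [Hyform_eq, Hyform_eq, ← blockForm_neg]
  congr 2
  funext j
  simp only [Pi.neg_apply, mv_sub, neg_sub]

lemma Gform_smul_eq {β : ℝ} (hβ : β ≠ 0) (σ1 σ2 τ s : ℝ) (x : ∀ i, EuclideanSpace ℝ (Fin (m i)))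
    (y : ∀ j, EuclideanSpace ℝ (Fin (d j))) (e : EuclideanSpace ℝ (Fin n)) :
    Gform A B β σ1 σ2 τ s x y (β • e)
      = β * blockForm σ1 (fun i => mv (A i) (x i)) + β * blockForm σ2 (fun j => mv (B j) (y j))
        + (2 - τ - s) * β * ‖e - sA B y‖ ^ 2 + (1 - τ) * β * (2 * ⟪sA B y, e⟫ - ‖sA B y‖ ^ 2) := by
  simp only [Gform, blockForm, norm_sub_sq_real, real_inner_smul_right, norm_smul,
    Real.norm_eq_abs, mul_pow, sq_abs, real_inner_comm e]
  unfold sA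
  field_simp
  ring

variable (c : EuclideanSpace ℝ (Fin n)) (f : ∀ i, EuclideanSpace ℝ (Fin (m i)) → ℝ)
  (g : ∀ j, EuclideanSpace ℝ (Fin (d j)) → ℝ) (β : ℝ)

lemma Lag_update_add_prox (x : ∀ i, EuclideanSpace ℝ (Fin (m i)))
    (y : ∀ j, EuclideanSpace ℝ (Fin (d j))) (μ : EuclideanSpace ℝ (Fin n)) (j : Fin q) (σ : ℝ) :
    ∃ C, ∀ z, Lag A B c f g β x (Function.update y j z) μ + σ * β / 2 * ‖mv (B j) (z - y j)‖ ^ 2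
      = g j z + ⟪-μ + β • (sA A x + sA B y - c) - ((σ + 1) * β) • mv (B j) (y j), mv (B j) z⟫
        + (σ + 1) * β / 2 * ‖mv (B j) z‖ ^ 2 + C := by
  classical
  obtain ⟨w, hw⟩ : ∃ w, w = sA A x + sA B y - mv (B j) (y j) - c := ⟨_, rfl⟩
  refine ⟨(∑ i, f i (x i)) + (∑ l, g l (y l)) - g j (y j) - ⟪μ, w⟫ + β / 2 * ‖w‖ ^ 2
    + σ * β / 2 * ‖mv (B j) (y j)‖ ^ 2, fun z => ?_⟩
  have hB : sA A x + sA B (Function.update y j z) - c = mv (B j) z + w := by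
    have : sA B (Function.update y j z) = sA B y + (mv (B j) z - mv (B j) (y j)) :=
      Finset.sum_update_apply (fun l => mv (B l)) y j z
    rw [this, hw]
    abel
  have hν : -μ + β • (sA A x + sA B y - c) - ((σ + 1) * β) • mv (B j) (y j)
      = -μ + β • w - (σ * β) • mv (B j) (y j) := by
    rw [hw]; module
  rw [Lag, hB, Finset.sum_update_apply g, hν, mv_sub, norm_add_sq_real, norm_sub_sq_real,
    inner_add_right, inner_sub_left, inner_add_left, inner_neg_left, real_inner_smul_left,
    real_inner_smul_left, real_inner_comm (mv (B j) z) w, real_inner_comm (mv (B j) z),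
    real_inner_comm (mv (B j) (y j))]
  ring

variable {Y : ∀ j, Set (EuclideanSpace ℝ (Fin (d j)))}

lemma inner_nonneg_of_y_update {σ : ℝ} {x : ∀ i, EuclideanSpace ℝ (Fin (m i))}
    {y : ∀ j, EuclideanSpace ℝ (Fin (d j))} {μ : EuclideanSpace ℝ (Fin n)} {j : Fin q}
    (hg : ConvexOn ℝ (Y j) (g j)) {ŷ : EuclideanSpace ℝ (Fin (d j))} (hŷ : ŷ ∈ Y j)
    (hmin : ∀ z ∈ Y j,
      Lag A B c f g β x (Function.update y j ŷ) μ + σ * β / 2 * ‖mv (B j) (ŷ - y j)‖ ^ 2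
        ≤ Lag A B c f g β x (Function.update y j z) μ + σ * β / 2 * ‖mv (B j) (z - y j)‖ ^ 2)
    {z : EuclideanSpace ℝ (Fin (d j))} (hz : z ∈ Y j) :
    0 ≤ g j z - g j ŷ + ⟪mv (B j) z - mv (B j) ŷ,
      -μ + β • (sA A x + sA B y - c) - ((σ + 1) * β) • (mv (B j) (y j) - mv (B j) ŷ)⟫ := by
  obtain ⟨C, hC⟩ := Lag_update_add_prox A B c f g β x y μ j σ
  have hmin' : IsMinOn (fun z => g j z + ⟪-μ + β • (sA A x + sA B y - c)
      - ((σ + 1) * β) • mv (B j) (y j), Matrix.toLpLin 2 2 (B j) z⟫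
      + (σ + 1) * β / 2 * ‖Matrix.toLpLin 2 2 (B j) z‖ ^ 2) (Y j) ŷ := by
    refine isMinOn_iff.2 fun z hz => ?_
    have := hmin z hz
    rw [hC, hC] at this
    simpa only [mv_eq_toLpLin, add_le_add_iff_right] using this
  have hν : -μ + β • (sA A x + sA B y - c) - ((σ + 1) * β) • (mv (B j) (y j) - mv (B j) ŷ)
      = -μ + β • (sA A x + sA B y - c) - ((σ + 1) * β) • mv (B j) (y j)
        + ((σ + 1) * β) • Matrix.toLpLin 2 2 (B j) ŷ := by
    rw [← mv_eq_toLpLin]; module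
  rw [hν]
  exact hg.inner_nonneg_of_isMinOn _ _ _ hmin' hŷ hz

end GSADMM

section GSADMMIterates

variable {p q n : ℕ} {m : Fin p → ℕ} {d : Fin q → ℕ}
  (A : ∀ i, Matrix (Fin n) (Fin (m i)) ℝ) (B : ∀ j, Matrix (Fin n) (Fin (d j)) ℝ)
  (c : EuclideanSpace ℝ (Fin n)) (f : ∀ i, EuclideanSpace ℝ (Fin (m i)) → ℝ)
  (g : ∀ j, EuclideanSpace ℝ (Fin (d j)) → ℝ) (β : ℝ) {σ τ s : ℝ}
  {Y : ∀ j, Set (EuclideanSpace ℝ (Fin (d j)))}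
  {x : ℕ → ∀ i, EuclideanSpace ℝ (Fin (m i))} {y : ℕ → ∀ j, EuclideanSpace ℝ (Fin (d j))}
  {lam lamh : ℕ → EuclideanSpace ℝ (Fin n)}

/-- Monotonicity of `∂(g j)` at two consecutive `y`-updates, with the multiplier updates
substituted. -/
lemma inner_nonneg_of_consecutive_y_updates (hg : ∀ j, ConvexOn ℝ (Y j) (g j))
    (hlamh : ∀ k, lamh k = lam k - (τ * β) • (sA A (x (k+1)) + sA B (y k) - c))
    (hymin : ∀ k j, y (k+1) j ∈ Y j ∧ ∀ z ∈ Y j,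
      Lag A B c f g β (x (k+1)) (Function.update (y k) j (y (k+1) j)) (lamh k)
          + σ * β / 2 * ‖mv (B j) (y (k+1) j - y k j)‖ ^ 2
        ≤ Lag A B c f g β (x (k+1)) (Function.update (y k) j z) (lamh k)
          + σ * β / 2 * ‖mv (B j) (z - y k j)‖ ^ 2)
    (hlam : ∀ k, lam (k+1) = lamh k - (s * β) • (sA A (x (k+1)) + sA B (y (k+1)) - c))
    {k : ℕ} (hk : 1 ≤ k) (j : Fin q) :
    0 ≤ ⟪mv (B j) (y k j - y (k+1) j),
      ((s - 1) * β) • (sA A (x k) + sA B (y k) - c)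
        + ((1 + τ) * β) • (sA A (x (k+1)) + sA B (y k) - c)
        + β • ∑ l, mv (B l) (y k l - y (k-1) l)
        - ((σ + 1) * β) • (mv (B j) (y k j - y (k+1) j) + mv (B j) (y k j - y (k-1) j))⟫ := by
  obtain ⟨k, rfl⟩ := Nat.exists_eq_add_of_le' hk
  rw [Nat.add_sub_cancel]
  have hnew := inner_nonneg_of_y_update A B c f g β (hg j) (hymin (k+1) j).1 (hymin (k+1) j).2
    (hymin k j).1
  have hold := inner_nonneg_of_y_update A B c f g β (hg j) (hymin k j).1 (hymin k j).2
    (hymin (k+1) j).1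
  have hdiff : ∑ l, mv (B l) (y (k+1) l - y k l) = sA B (y (k+1)) - sA B (y k) := sA_sub B _ _
  rw [hdiff]
  simp only [mv_sub]
  refine (add_nonneg hnew hold).trans_eq ?_
  rw [hlamh, hlam, hlamh, ← neg_sub (mv (B j) (y (k+1) j)), inner_neg_left]
  simp only [inner_add_right, inner_sub_right, inner_neg_right, real_inner_smul_right]
  ring

end GSADMMIterates

lemma one_add_pos_of_stepsize {τ s : ℝ} (hτs : 0 < τ + s)
    (hquad : 0 < -τ ^ 2 - s ^ 2 - τ * s + τ + s + 1) : 0 < 1 + τ := by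
  by_contra! hτ
  nlinarith [mul_nonneg hτs.le (neg_nonneg.2 hτ), mul_nonneg (show 0 ≤ 1 - τ by linarith)
    (neg_nonneg.2 hτ)]

theorem stmt12_general
    {p q n : ℕ}
    {m : Fin p → ℕ} {d : Fin q → ℕ}
    (A : ∀ i, Matrix (Fin n) (Fin (m i)) ℝ)
    (B : ∀ j, Matrix (Fin n) (Fin (d j)) ℝ)
    (c : EuclideanSpace ℝ (Fin n))
    (Y : ∀ j, Set (EuclideanSpace ℝ (Fin (d j))))
    (hYcv : ∀ j, Convex ℝ (Y j))
    (f : ∀ i, EuclideanSpace ℝ (Fin (m i)) → ℝ)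
    (g : ∀ j, EuclideanSpace ℝ (Fin (d j)) → ℝ)
    (hg : ∀ j, ConvexOn ℝ Set.univ (g j))
    (β σ1 σ2 τ s : ℝ) (hβ : 0 < β)
    (x : ℕ → ∀ i, EuclideanSpace ℝ (Fin (m i)))
    (y : ℕ → ∀ j, EuclideanSpace ℝ (Fin (d j)))
    (lam lamh : ℕ → EuclideanSpace ℝ (Fin n))
    (hlamh : ∀ k, lamh k = lam k - (τ * β) • (sA A (x (k+1)) + sA B (y k) - c))
    (hymin : ∀ k j, y (k+1) j ∈ Y j ∧ ∀ z ∈ Y j,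
      Lag A B c f g β (x (k+1)) (Function.update (y k) j (y (k+1) j)) (lamh k)
          + σ2 * β / 2 * ‖mv (B j) (y (k+1) j - y k j)‖ ^ 2
        ≤ Lag A B c f g β (x (k+1)) (Function.update (y k) j z) (lamh k)
          + σ2 * β / 2 * ‖mv (B j) (z - y k j)‖ ^ 2)
    (hlam : ∀ k, lam (k+1) = lamh k - (s * β) • (sA A (x (k+1)) + sA B (y (k+1)) - c))
    (hσ1 : (p : ℝ) - 1 < σ1) (hσ2 : (q : ℝ) - 1 < σ2)
    (hK : τ + s > 0 ∧ τ ≤ 1 ∧ -τ ^ 2 - s ^ 2 - τ * s + τ + s + 1 > 0) :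
    ∃ ξ1 : ℝ, 0 < ξ1 ∧
      (let ξ2 : ℝ := (2 - τ - s - (1 - s) ^ 2 / (1 + τ)) * β
       let ξ3 : ℝ := (1 - s) ^ 2 / (1 + τ) * β
       let ξ4 : ℝ := (1 - τ) / (1 + τ)
       0 < ξ2 ∧ 0 ≤ ξ3 ∧ 0 ≤ ξ4 ∧
       ∀ k : ℕ, 1 ≤ k →
        Gform A B β σ1 σ2 τ s (fun i => x k i - x (k+1) i)
            (fun j => y k j - y (k+1) j)
            (lam k - (lam k - β • (sA A (x (k+1)) + sA B (y k) - c)))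
          ≥ ξ1 * ((∑ i, ‖mv (A i) (x k i - x (k+1) i)‖ ^ 2)
                + ∑ j, ‖mv (B j) (y k j - y (k+1) j)‖ ^ 2)
            + ξ2 * ‖sA A (x (k+1)) + sA B (y (k+1)) - c‖ ^ 2
            + ξ3 * (‖sA A (x (k+1)) + sA B (y (k+1)) - c‖ ^ 2
                - ‖sA A (x k) + sA B (y k) - c‖ ^ 2)
            + ξ4 * (Hyform B β σ2 (fun j => y (k+1) j - y k j)
                - Hyform B β σ2 (fun j => y k j - y (k-1) j))) := by
  obtain ⟨hτs, hτ1, hquad⟩ := hK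
  have hτ : 0 < 1 + τ := one_add_pos_of_stepsize hτs hquad
  have hξ2 : (1 - s) ^ 2 / (1 + τ) < 2 - τ - s := by
    rw [div_lt_iff₀ hτ]; linarith
  refine ⟨β * min (σ1 + 1 - p) (σ2 + 1 - q), mul_pos hβ (lt_min (by linarith) (by linarith)),
    mul_pos (sub_pos.2 hξ2) hβ, by positivity, div_nonneg (by linarith) hτ.le, fun k hk => ?_⟩
  have hkey := le_inner_sum_of_forall_inner_nonneg (by rw [Fintype.card_fin]; linarith) hβ.le _ _ _
    (inner_nonneg_of_consecutive_y_updates A B c f g β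
      (fun j => (hg j).subset (Set.subset_univ _) (hYcv j)) hlamh hymin hlam hk)
  have hcomb := le_mul_two_inner_sub_norm_sq_of_le_inner _ _ _ hβ.le hτ hτ1 hkey
  have hres : sA A (x (k+1)) + sA B (y k) - c - sA B (fun j => y k j - y (k+1) j)
      = sA A (x (k+1)) + sA B (y (k+1)) - c := by
    rw [sA_sub]; abel
  rw [sub_sub_cancel, Gform_smul_eq A B hβ.ne', hres, Hyform_sub_comm, Hyform_eq, Hyform_eq]
  have hxForm := mul_sum_norm_sq_le_blockForm (μ := min (σ1 + 1 - p) (σ2 + 1 - q))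
    (by rw [Fintype.card_fin]; exact min_le_left _ _) fun i => mv (A i) (x k i - x (k+1) i)
  have hyForm := mul_sum_norm_sq_le_blockForm (μ := min (σ1 + 1 - p) (σ2 + 1 - q))
    (by rw [Fintype.card_fin]; exact min_le_right _ _) fun j => mv (B j) (y k j - y (k+1) j)
  change _ ≤ (1 - τ) * β * (2 * ⟪sA B (fun j => y k j - y (k+1) j), _⟫
    - ‖sA B (fun j => y k j - y (k+1) j)‖ ^ 2) at hcomb
  linear_combination β * hxForm + β * hyForm + hcomb

/-- lower bound for `‖w^k − w̃^k‖_G²` with explicit constants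
`ξ2 = (2 − τ − s − (1−s)²/(1+τ))β > 0`, `ξ3 = ((1−s)²/(1+τ))β ≥ 0`,
`ξ4 = (1−τ)/(1+τ) ≥ 0` (Theorem 3.8 of the paper). -/
theorem stmt12
    {p q n : ℕ} (hp : 1 ≤ p) (hq : 1 ≤ q)
    {m : Fin p → ℕ} {d : Fin q → ℕ}
    (A : ∀ i, Matrix (Fin n) (Fin (m i)) ℝ)
    (B : ∀ j, Matrix (Fin n) (Fin (d j)) ℝ)
    (hA : ∀ i, LinearIndependent ℝ (fun l => (A i)ᵀ l))
    (hB : ∀ j, LinearIndependent ℝ (fun l => (B j)ᵀ l))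
    (c : EuclideanSpace ℝ (Fin n))
    (X : ∀ i, Set (EuclideanSpace ℝ (Fin (m i))))
    (Y : ∀ j, Set (EuclideanSpace ℝ (Fin (d j))))
    (hXne : ∀ i, (X i).Nonempty) (hXcl : ∀ i, IsClosed (X i)) (hXcv : ∀ i, Convex ℝ (X i))
    (hYne : ∀ j, (Y j).Nonempty) (hYcl : ∀ j, IsClosed (Y j)) (hYcv : ∀ j, Convex ℝ (Y j))
    (f : ∀ i, EuclideanSpace ℝ (Fin (m i)) → ℝ)
    (g : ∀ j, EuclideanSpace ℝ (Fin (d j)) → ℝ)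
    (hf : ∀ i, ConvexOn ℝ Set.univ (f i))
    (hg : ∀ j, ConvexOn ℝ Set.univ (g j))
    (β σ1 σ2 τ s : ℝ) (hβ : 0 < β)
    (x : ℕ → ∀ i, EuclideanSpace ℝ (Fin (m i)))
    (y : ℕ → ∀ j, EuclideanSpace ℝ (Fin (d j)))
    (lam lamh : ℕ → EuclideanSpace ℝ (Fin n))
    (hxmin : ∀ k i, x (k+1) i ∈ X i ∧ ∀ z ∈ X i,
      Lag A B c f g β (Function.update (x k) i (x (k+1) i)) (y k) (lam k)
          + σ1 * β / 2 * ‖mv (A i) (x (k+1) i - x k i)‖ ^ 2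
        ≤ Lag A B c f g β (Function.update (x k) i z) (y k) (lam k)
          + σ1 * β / 2 * ‖mv (A i) (z - x k i)‖ ^ 2)
    (hlamh : ∀ k, lamh k = lam k - (τ * β) • (sA A (x (k+1)) + sA B (y k) - c))
    (hymin : ∀ k j, y (k+1) j ∈ Y j ∧ ∀ z ∈ Y j,
      Lag A B c f g β (x (k+1)) (Function.update (y k) j (y (k+1) j)) (lamh k)
          + σ2 * β / 2 * ‖mv (B j) (y (k+1) j - y k j)‖ ^ 2
        ≤ Lag A B c f g β (x (k+1)) (Function.update (y k) j z) (lamh k)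
          + σ2 * β / 2 * ‖mv (B j) (z - y k j)‖ ^ 2)
    (hlam : ∀ k, lam (k+1) = lamh k - (s * β) • (sA A (x (k+1)) + sA B (y (k+1)) - c))
    (hσ1 : (p : ℝ) - 1 < σ1) (hσ2 : (q : ℝ) - 1 < σ2)
    (hK : τ + s > 0 ∧ τ ≤ 1 ∧ -τ ^ 2 - s ^ 2 - τ * s + τ + s + 1 > 0) :
    ∃ ξ1 : ℝ, 0 < ξ1 ∧
      (let ξ2 : ℝ := (2 - τ - s - (1 - s) ^ 2 / (1 + τ)) * β
       let ξ3 : ℝ := (1 - s) ^ 2 / (1 + τ) * β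
       let ξ4 : ℝ := (1 - τ) / (1 + τ)
       0 < ξ2 ∧ 0 ≤ ξ3 ∧ 0 ≤ ξ4 ∧
       ∀ k : ℕ, 1 ≤ k →
        Gform A B β σ1 σ2 τ s (fun i => x k i - x (k+1) i)
            (fun j => y k j - y (k+1) j)
            (lam k - (lam k - β • (sA A (x (k+1)) + sA B (y k) - c)))
          ≥ ξ1 * ((∑ i, ‖mv (A i) (x k i - x (k+1) i)‖ ^ 2)
                + ∑ j, ‖mv (B j) (y k j - y (k+1) j)‖ ^ 2)
            + ξ2 * ‖sA A (x (k+1)) + sA B (y (k+1)) - c‖ ^ 2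
            + ξ3 * (‖sA A (x (k+1)) + sA B (y (k+1)) - c‖ ^ 2
                - ‖sA A (x k) + sA B (y k) - c‖ ^ 2)
            + ξ4 * (Hyform B β σ2 (fun j => y (k+1) j - y k j)
                - Hyform B β σ2 (fun j => y k j - y (k-1) j))) :=
  stmt12_general A B c Y hYcv f g hg β σ1 σ2 τ s hβ x y lam lamh hlamh hymin hlam hσ1 hσ2 hK
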